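/- Let M be a commutative cocommutative bialgebra over R and r a symmetric R-valued bicharacter of M (i.e., r(a⊗b) = r(b⊗a) for all a,b). Then the twisted multiplication a∘b = Σ a'b' r(a''⊗b'') is commutative. -/
import Mathlib


open TensorProduct Coalgebra

/-- An `R`-valued bicharacter of a bialgebra `M` over `R`. -/
structure Bicharacter (R M : Type) [CommRing R] [Ring M] [Bialgebra R M] where
  toFun : M →ₗ[R] M →ₗ[R] R
  one_left : ∀ a : M, toFun 1 a = counit (R := R) a
  one_right : ∀ a : M, toFun a 1 = counit (R := R) a
  mul_left : ∀ (a b c : M) (ι : Type) (t : Finset ι) (c₁ c₂ : ι → M),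
    comul (R := R) c = ∑ i ∈ t, c₁ i ⊗ₜ[R] c₂ i →
    toFun (a * b) c = ∑ i ∈ t, toFun a (c₁ i) * toFun b (c₂ i)
  mul_right : ∀ (a b c : M) (ι : Type) (t : Finset ι) (a₁ a₂ : ι → M),
    comul (R := R) a = ∑ i ∈ t, a₁ i ⊗ₜ[R] a₂ i →
    toFun a (b * c) = ∑ i ∈ t, toFun (a₁ i) b * toFun (a₂ i) c

/-- `mul` is the twisted multiplication `a ∘ b = Σ a'b' r(a''⊗b'')`. -/
def IsTwistedMul (R M : Type) [CommRing R] [CommRing M] [Bialgebra R M]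
    (r : Bicharacter R M) (mul : M →ₗ[R] M →ₗ[R] M) : Prop :=
  ∀ (a b : M) (ι κ : Type) (t : Finset ι) (u : Finset κ)
    (a₁ a₂ : ι → M) (b₁ b₂ : κ → M),
    comul (R := R) a = ∑ i ∈ t, a₁ i ⊗ₜ[R] a₂ i →
    comul (R := R) b = ∑ j ∈ u, b₁ j ⊗ₜ[R] b₂ j →
    mul a b = ∑ i ∈ t, ∑ j ∈ u, r.toFun (a₂ i) (b₂ j) • (a₁ i * b₁ j)

/-- If `r` is a symmetric `R`-valued bicharacter of a commutative cocommutative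
bialgebra `M`, then the twisted multiplication `a ∘ b = Σ a'b' r(a''⊗b'')` is
commutative. -/
theorem twisting_symmetric_comm (R M : Type) [CommRing R] [CommRing M] [Bialgebra R M]
    (hcoc : ∀ a : M, TensorProduct.comm R M M (comul (R := R) a) = comul (R := R) a)
    (r : Bicharacter R M) (hsymm : ∀ a b : M, r.toFun a b = r.toFun b a)
    (mul : M →ₗ[R] M →ₗ[R] M) (hmul : IsTwistedMul R M r mul) :
    ∀ a b : M, mul a b = mul b a := by
  intro a b
  obtain ⟨s, hs⟩ := TensorProduct.exists_finset (comul (R := R) a)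
  obtain ⟨u, hu⟩ := TensorProduct.exists_finset (comul (R := R) b)
  rw [hmul a b (M × M) (M × M) s u Prod.fst Prod.snd Prod.fst Prod.snd hs hu,
      hmul b a (M × M) (M × M) u s Prod.fst Prod.snd Prod.fst Prod.snd hu hs,
      Finset.sum_comm]
  simp only [hsymm]
  simp [mul_comm]
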